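/- (Core of Lemma B.4, lower bound Ω(T^{2−c})) For every real c with 1 < c < 2 there exist a constant C > 0 and an integer T₀ such that for every integer T ≥ T₀ the following holds. Let μ(m) = Σ_{n=1}^{m} (n+1)^{−c}, F(m) = Σ_{n=1}^{m} μ(n), and P = ⌈(2−c)^{1/(c−1)}·T⌉. Then there exists a real ε with 0 < ε < μ(P) such that for every integer s with 0 ≤ s ≤ P: ( F(T) − F(T−s) − F(P−s) + (μ(P) − ε)(P − 2s) ) / 2 ≥ C·T^{2−c}. -/

import Mathlib

/-!
Put `x = (P+1)^(-c)` and `m = P - s`. Every increment of `μ` up to `P` is at least `x`, so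
`m μ(P) - F(m) ≥ (mP - m(m+1)/2) x ≥ m (P-1) x / 2`. Since `(2-c)^(1/(c-1)) ≤ e⁻¹ < 1/2`,
we have `2P ≤ T + 1`, so all `s` terms of `F(T) - F(T-s)` are at least `μ(P)`. With these two
bounds the quantity is at least `(m μ(P) - F(m) + ε (P - 2m)) / 2`, and the choice
`ε = (P-1) x / 4` makes the terms in `m` cancel, leaving `εP/2`, of order `P^(2-c) ≍ T^(2-c)`.
-/

/-- `μ(m) = Σ_{n=1}^{m} (n+1)^(-c)`. -/
noncomputable def mu (c : ℝ) (m : ℕ) : ℝ := ∑ n ∈ Finset.Icc 1 m, ((n : ℝ) + 1) ^ (-c)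

/-- `F(m) = Σ_{n=1}^{m} μ(n)`. -/
noncomputable def F (c : ℝ) (m : ℕ) : ℝ := ∑ n ∈ Finset.Icc 1 m, mu c n

/-- The change point `P = ⌈(2-c)^(1/(c-1))·T⌉`. -/
noncomputable def P (c : ℝ) (T : ℕ) : ℕ := ⌈(2 - c) ^ (1 / (c - 1)) * (T : ℝ)⌉₊

open Finset Real

lemma mu_monotone (c : ℝ) : Monotone (mu c) := fun _ _ hab =>
  sum_le_sum_of_subset_of_nonneg (Icc_subset_Icc_right hab)
    fun _ _ _ => rpow_nonneg (by positivity) _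

lemma mu_sub_mu_eq_sum_Ioc (c : ℝ) {n p : ℕ} (h : n ≤ p) :
    mu c p - mu c n = ∑ k ∈ Ioc n p, ((k : ℝ) + 1) ^ (-c) := by
  rw [sub_eq_iff_eq_add']
  exact (sum_Ioc_consecutive _ (Nat.zero_le n) h).symm

lemma sub_mul_rpow_le_mu_sub_mu {c : ℝ} (hc : 0 ≤ c) {n p : ℕ} (h : n ≤ p) :
    ((p : ℝ) - n) * ((p : ℝ) + 1) ^ (-c) ≤ mu c p - mu c n := by
  rw [mu_sub_mu_eq_sum_Ioc c h]
  have hcard : ((p : ℝ) - n) = (#(Ioc n p) : ℝ) := by simp [Nat.cast_sub h]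
  rw [hcard, ← nsmul_eq_mul]
  refine card_nsmul_le_sum _ _ _ fun k hk => ?_
  have hkp : (k : ℝ) ≤ p := by exact_mod_cast (mem_Ioc.mp hk).2
  exact rpow_le_rpow_of_nonpos (by positivity) (by linarith) (by linarith)

lemma natCast_mul_rpow_le_mu {c : ℝ} (hc : 0 ≤ c) (p : ℕ) :
    (p : ℝ) * ((p : ℝ) + 1) ^ (-c) ≤ mu c p := by
  simpa [mu] using sub_mul_rpow_le_mu_sub_mu hc (Nat.zero_le p)

lemma quadratic_mul_rpow_le_mul_mu_sub_F {c : ℝ} (hc : 0 ≤ c) {m p : ℕ} (h : m ≤ p) :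
    ((m : ℝ) * p - m * (m + 1) / 2) * ((p : ℝ) + 1) ^ (-c) ≤ m * mu c p - F c m := by
  induction m with
  | zero => simp [F]
  | succ m ih =>
    have hstep := sub_mul_rpow_le_mu_sub_mu hc h
    have hF : F c (m + 1) = F c m + mu c (m + 1) := sum_Icc_succ_top (by omega) _
    rw [hF]
    push_cast at hstep ⊢
    nlinarith [ih (by omega)]

lemma mul_mu_le_F_sub_F (c : ℝ) {s p T : ℕ} (hs : s ≤ T) (hps : p + s ≤ T + 1) :
    (s : ℝ) * mu c p ≤ F c T - F c (T - s) := by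
  have hsplit : F c T - F c (T - s) = ∑ n ∈ Ioc (T - s) T, mu c n := by
    rw [sub_eq_iff_eq_add']
    exact (sum_Ioc_consecutive _ (Nat.zero_le _) (Nat.sub_le T s)).symm
  have hcard : #(Ioc (T - s) T) = s := by simp; omega
  have hbound := card_nsmul_le_sum (Ioc (T - s) T) (mu c) (mu c p)
    fun n hn => mu_monotone c (by simp only [mem_Ioc] at hn; omega)
  rw [hcard, nsmul_eq_mul] at hbound
  rwa [hsplit]

/-- The paper's `ε`: the constant arm has mean `μ(p) - armGap c p`. -/
noncomputable def armGap (c : ℝ) (p : ℕ) : ℝ := ((p : ℝ) - 1) * ((p : ℝ) + 1) ^ (-c) / 4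

lemma armGap_pos (c : ℝ) {p : ℕ} (hp : 2 ≤ p) : 0 < armGap c p := by
  have hp' : (2 : ℝ) ≤ p := by exact_mod_cast hp
  unfold armGap
  have hx := rpow_pos_of_pos (by positivity : (0 : ℝ) < p + 1) (-c)
  have hp1 : (0 : ℝ) < p - 1 := by linarith
  positivity

lemma armGap_lt_mu {c : ℝ} (hc : 0 ≤ c) (p : ℕ) : armGap c p < mu c p := by
  have hx := rpow_pos_of_pos (by positivity : (0 : ℝ) < p + 1) (-c)
  have hp : (0 : ℝ) ≤ p := p.cast_nonneg
  calc armGap c p < p * ((p : ℝ) + 1) ^ (-c) := by unfold armGap; nlinarith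
    _ ≤ mu c p := natCast_mul_rpow_le_mu hc p

lemma armGap_mul_div_two_le {c : ℝ} (hc : 0 ≤ c) {s p T : ℕ} (hs : s ≤ p)
    (hpT : 2 * p ≤ T + 1) :
    armGap c p * p / 2 ≤
      (F c T - F c (T - s) - F c (p - s) + (mu c p - armGap c p) * ((p : ℝ) - 2 * s)) / 2 := by
  have hhead := mul_mu_le_F_sub_F c (s := s) (p := p) (T := T) (by omega) (by omega)
  have htail := quadratic_mul_rpow_le_mul_mu_sub_F hc (Nat.sub_le p s)
  have hx := rpow_nonneg (by positivity : (0 : ℝ) ≤ p + 1) (-c)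
  have hsp : (s : ℝ) ≤ p := by exact_mod_cast hs
  rw [Nat.cast_sub hs] at htail
  unfold armGap
  nlinarith [mul_nonneg (mul_nonneg (sub_nonneg.mpr hsp) (s.cast_nonneg : (0 : ℝ) ≤ s)) hx]

lemma one_sub_rpow_one_div_le_exp_neg_one {t : ℝ} (ht0 : 0 < t) (ht1 : t ≤ 1) :
    (1 - t) ^ (1 / t) ≤ exp (-1) := by
  calc (1 - t) ^ (1 / t) ≤ exp (-t) ^ (1 / t) :=
        rpow_le_rpow (by linarith) (by linarith [add_one_le_exp (-t)]) (by positivity)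
    _ = exp (-1) := by rw [← exp_mul]; field_simp

lemma rpow_two_sub_le_armGap_mul {c : ℝ} {p : ℕ} (hp : 2 ≤ p) :
    ((p : ℝ) + 1) ^ (2 - c) / 36 ≤ armGap c p * p / 2 := by
  have hp' : (2 : ℝ) ≤ p := by exact_mod_cast hp
  have hx := rpow_nonneg (by positivity : (0 : ℝ) ≤ p + 1) (-c)
  rw [sub_eq_add_neg, rpow_add (by positivity), rpow_two]
  unfold armGap
  nlinarith [mul_nonneg (by nlinarith : (0 : ℝ) ≤ 9 * ((p - 1) * p) - 2 * (p + 1) ^ 2) hx]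

/-- (Core of Lemma B.4, lower bound Ω(T^(2-c))) For every real `1 < c < 2` there are a
constant `C > 0` and an integer `T₀` such that for every `T ≥ T₀` there is a real
`0 < ε < μ(P)` with
`(F(T) - F(T-s) - F(P-s) + (μ(P) - ε)(P - 2s))/2 ≥ C·T^(2-c)` for every integer `0 ≤ s ≤ P`. -/
theorem lemmaB4_core (c : ℝ) (hc1 : 1 < c) (hc2 : c < 2) :
    ∃ C : ℝ, 0 < C ∧ ∃ T₀ : ℕ, ∀ T : ℕ, T₀ ≤ T →
      ∃ ε : ℝ, 0 < ε ∧ ε < mu c (P c T) ∧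
        ∀ s : ℕ, s ≤ P c T →
          C * (T : ℝ) ^ (2 - c) ≤
            (F c T - F c (T - s) - F c (P c T - s) +
              (mu c (P c T) - ε) * ((P c T : ℝ) - 2 * (s : ℝ))) / 2 := by
  set α : ℝ := (2 - c) ^ (1 / (c - 1))
  have hα_pos : 0 < α := rpow_pos_of_pos (by linarith) _
  have hα_half : α < 1 / 2 := by
    have h := one_sub_rpow_one_div_le_exp_neg_one (t := c - 1) (by linarith) (by linarith)
    rw [show 1 - (c - 1) = 2 - c by ring] at h
    exact h.trans_lt exp_neg_one_lt_half
  refine ⟨α ^ (2 - c) / 36, by positivity, ⌈2 / α⌉₊, fun T hT => ?_⟩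
  have hT : 2 / α ≤ T := Nat.ceil_le.mp hT
  have hP_ge : α * T ≤ P c T := Nat.le_ceil _
  have hP_lt : (P c T : ℝ) < α * T + 1 := Nat.ceil_lt_add_one (by positivity)
  have hP2 : 2 ≤ P c T := by
    have : (2 : ℝ) ≤ α * T := by rwa [div_le_iff₀' hα_pos] at hT
    exact_mod_cast this.trans hP_ge
  have hPT : 2 * P c T ≤ T + 1 := by
    have : ((2 * P c T : ℕ) : ℝ) < T + 2 := by push_cast; nlinarith
    exact Nat.lt_succ_iff.mp (by exact_mod_cast this)
  refine ⟨armGap c (P c T), armGap_pos c hP2, armGap_lt_mu (by linarith) _, fun s hs => ?_⟩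
  calc α ^ (2 - c) / 36 * (T : ℝ) ^ (2 - c) = (α * T) ^ (2 - c) / 36 := by
        rw [mul_rpow hα_pos.le T.cast_nonneg]; ring
    _ ≤ ((P c T : ℝ) + 1) ^ (2 - c) / 36 := by gcongr; linarith
    _ ≤ armGap c (P c T) * P c T / 2 := rpow_two_sub_le_armGap_mul hP2
    _ ≤ _ := armGap_mul_div_two_le (by linarith) hs hPT
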